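/- For all ordinals α and β, α·β ≤ α⊙β ≤ α⊗β, where ⊙ is the Hessenberg-based product defined by α⊙0 = 0, α⊙(β+1) = (α⊙β) ⊕ α, and α⊙β = sup{α⊙γ : γ < β} for limit β, and ⊗ is the natural (Hessenberg) product. -/

import Mathlib

open Ordinal

universe u

namespace Ordinal

/-- Natural (Hessenberg) sum, as formerly defined in Mathlib's `SetTheory.Ordinal.NaturalOps`. -/
noncomputable def nadd (a b : Ordinal.{u}) : Ordinal.{u} :=
  max (⨆ x : Set.Iio a, Order.succ (nadd x.1 b)) (⨆ x : Set.Iio b, Order.succ (nadd a x.1))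
termination_by (a, b)
decreasing_by all_goals cases x; decreasing_tactic

namespace NaturalOps

scoped infixl:65 " ♯ " => Ordinal.nadd

end NaturalOps

open NaturalOps

/-- Natural (Hessenberg) product, as formerly defined in Mathlib's `SetTheory.Ordinal.NaturalOps`. -/
noncomputable def nmul (a b : Ordinal.{u}) : Ordinal.{u} :=
  sInf {c | ∀ a' < a, ∀ b' < b, nmul a' b ♯ nmul a b' < c ♯ nmul a' b'}
termination_by (a, b)

namespace NaturalOps

scoped infixl:70 " ⨳ " => Ordinal.nmul

end NaturalOps

end Ordinal

open scoped NaturalOps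

/-- The Hessenberg-based product `a ⊙ b`, defined by recursion on `b`:
`a ⊙ 0 = 0`, `a ⊙ (b+1) = (a ⊙ b) ♯ a`, and `a ⊙ b = sup {a ⊙ γ : γ < b}` for limit `b`. -/
noncomputable def hprod (a b : Ordinal) : Ordinal :=
  Ordinal.limitRecOn b 0 (fun _ ih => ih ♯ a)
    (fun o _ ih => ⨆ γ : Set.Iio o, ih γ γ.2)

namespace Ordinal

theorem nadd_le_iff {a b c : Ordinal.{u}} :
    a ♯ b ≤ c ↔ (∀ a' < a, a' ♯ b < c) ∧ ∀ b' < b, a ♯ b' < c := by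
  rw [nadd.eq_1 a b, max_le_iff, Ordinal.iSup_le_iff, Ordinal.iSup_le_iff]
  simp only [Order.succ_le_iff, Subtype.forall, Set.mem_Iio]

theorem lt_nadd_iff {a b c : Ordinal.{u}} :
    c < a ♯ b ↔ (∃ a' < a, c ≤ a' ♯ b) ∨ ∃ b' < b, c ≤ a ♯ b' := by
  rw [← not_le, nadd_le_iff]
  simp only [not_and_or, not_forall, not_lt, exists_prop]

theorem nadd_lt_nadd_right {a b : Ordinal.{u}} (h : a < b) (c : Ordinal.{u}) : a ♯ c < b ♯ c :=
  lt_nadd_iff.2 (Or.inl ⟨a, h, le_rfl⟩)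

theorem nadd_lt_nadd_left {b c : Ordinal.{u}} (h : b < c) (a : Ordinal.{u}) : a ♯ b < a ♯ c :=
  lt_nadd_iff.2 (Or.inr ⟨b, h, le_rfl⟩)

theorem nadd_le_nadd_right {a b : Ordinal.{u}} (h : a ≤ b) (c : Ordinal.{u}) : a ♯ c ≤ b ♯ c := by
  rcases h.lt_or_eq with h | rfl
  · exact (nadd_lt_nadd_right h c).le
  · exact le_rfl

theorem nadd_le_nadd_left {b c : Ordinal.{u}} (h : b ≤ c) (a : Ordinal.{u}) : a ♯ b ≤ a ♯ c := by
  rcases h.lt_or_eq with h | rfl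
  · exact (nadd_lt_nadd_left h a).le
  · exact le_rfl

theorem nadd_lt_nadd_iff_right {a b c : Ordinal.{u}} : a ♯ c < b ♯ c ↔ a < b :=
  ⟨fun h => lt_of_not_ge fun h' => absurd h (not_lt.2 (nadd_le_nadd_right h' c)),
    fun h => nadd_lt_nadd_right h c⟩

theorem nadd_lt_nadd_of_lt_of_le {a b c d : Ordinal.{u}} (h1 : a < b) (h2 : c ≤ d) :
    a ♯ c < b ♯ d :=
  (nadd_lt_nadd_right h1 c).trans_le (nadd_le_nadd_left h2 b)

theorem nadd_lt_nadd_of_le_of_lt {a b c d : Ordinal.{u}} (h1 : a ≤ b) (h2 : c < d) :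
    a ♯ c < b ♯ d :=
  (nadd_le_nadd_right h1 c).trans_lt (nadd_lt_nadd_left h2 b)

theorem nadd_comm (a b : Ordinal.{u}) : a ♯ b = b ♯ a := by
  rw [nadd.eq_1 a b, nadd.eq_1 b a, max_comm]
  congr 1 <;> congr 1 <;> funext x <;> rcases x with ⟨x, hx⟩ <;>
    exact congrArg _ (nadd_comm _ _)
termination_by (a, b)

theorem nadd_zero (a : Ordinal.{u}) : a ♯ 0 = a := by
  apply le_antisymm
  · rw [nadd_le_iff]
    refine ⟨fun a' ha => ?_, fun b' hb => absurd hb (not_lt.2 zero_le)⟩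
    rw [nadd_zero a']
    exact ha
  · exact le_of_forall_lt fun c hc => lt_nadd_iff.2 (Or.inl ⟨c, hc, (nadd_zero c).ge⟩)
termination_by a

theorem zero_nadd (a : Ordinal.{u}) : 0 ♯ a = a := by
  rw [nadd_comm, nadd_zero]

theorem le_nadd_self (a b : Ordinal.{u}) : a ≤ a ♯ b :=
  (nadd_zero a).symm.le.trans (nadd_le_nadd_left (zero_le : (0 : Ordinal.{u}) ≤ b) a)

theorem nadd_assoc (a b c : Ordinal.{u}) : a ♯ b ♯ c = a ♯ (b ♯ c) := by
  apply le_antisymm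
  · rw [nadd_le_iff]
    refine ⟨fun d hd => ?_, fun c' hc => ?_⟩
    · rcases lt_nadd_iff.1 hd with ⟨a', ha, hd⟩ | ⟨b', hb, hd⟩
      · calc d ♯ c ≤ a' ♯ b ♯ c := nadd_le_nadd_right hd c
          _ = a' ♯ (b ♯ c) := nadd_assoc a' b c
          _ < a ♯ (b ♯ c) := nadd_lt_nadd_right ha _
      · calc d ♯ c ≤ a ♯ b' ♯ c := nadd_le_nadd_right hd c
          _ = a ♯ (b' ♯ c) := nadd_assoc a b' c
          _ < a ♯ (b ♯ c) := nadd_lt_nadd_left (nadd_lt_nadd_right hb c) a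
    · rw [nadd_assoc a b c']
      exact nadd_lt_nadd_left (nadd_lt_nadd_left hc b) a
  · rw [nadd_le_iff]
    refine ⟨fun a' ha => ?_, fun d hd => ?_⟩
    · rw [← nadd_assoc a' b c]
      exact nadd_lt_nadd_right (nadd_lt_nadd_right ha b) c
    · rcases lt_nadd_iff.1 hd with ⟨b', hb, hd⟩ | ⟨c', hc, hd⟩
      · calc a ♯ d ≤ a ♯ (b' ♯ c) := nadd_le_nadd_left hd a
          _ = a ♯ b' ♯ c := (nadd_assoc a b' c).symm
          _ < a ♯ b ♯ c := nadd_lt_nadd_right (nadd_lt_nadd_left hb a) c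
      · calc a ♯ d ≤ a ♯ (b ♯ c') := nadd_le_nadd_left hd a
          _ = a ♯ b ♯ c' := (nadd_assoc a b c').symm
          _ < a ♯ b ♯ c := nadd_lt_nadd_left hc _
termination_by (a, b, c)

instance : Std.Associative (α := Ordinal.{u}) nadd := ⟨nadd_assoc⟩

instance : Std.Commutative (α := Ordinal.{u}) nadd := ⟨nadd_comm⟩

theorem add_le_nadd (a b : Ordinal.{u}) : a + b ≤ a ♯ b := by
  rcases eq_or_ne b 0 with rfl | hb
  · rw [add_zero, nadd_zero]
  · refine le_of_forall_lt fun x hx => ?_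
    obtain ⟨d, hd, hx⟩ := (Ordinal.lt_add_iff hb).1 hx
    exact lt_of_le_of_lt (hx.trans (add_le_nadd a d)) (nadd_lt_nadd_left hd a)
termination_by b

theorem nadd_one (a : Ordinal.{u}) : a ♯ 1 = Order.succ a := by
  apply le_antisymm
  · rw [nadd_le_iff]
    refine ⟨fun a' ha => ?_, fun b' hb => ?_⟩
    · rw [nadd_one a']
      exact Order.succ_lt_succ ha
    · rw [Ordinal.lt_one_iff_zero] at hb
      subst hb
      rw [nadd_zero]
      exact Order.lt_succ a
  · rw [Order.succ_le_iff]
    calc a = a ♯ 0 := (nadd_zero a).symm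
      _ < a ♯ 1 := nadd_lt_nadd_left zero_lt_one a
termination_by a

theorem nmul_nonempty (a b : Ordinal.{u}) :
    {c : Ordinal.{u} | ∀ a' < a, ∀ b' < b, a' ⨳ b ♯ a ⨳ b' < c ♯ a' ⨳ b'}.Nonempty := by
  refine ⟨⨆ p : Set.Iio a × Set.Iio b, Order.succ (p.1.1 ⨳ b ♯ a ⨳ p.2.1),
    fun a' ha b' hb => ?_⟩
  exact lt_of_lt_of_le (Order.lt_succ _)
    ((Ordinal.le_iSup (fun p : Set.Iio a × Set.Iio b => Order.succ (p.1.1 ⨳ b ♯ a ⨳ p.2.1))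
      (⟨a', ha⟩, ⟨b', hb⟩)).trans (le_nadd_self _ _))

theorem nmul_mem (a b : Ordinal.{u}) :
    a ⨳ b ∈ {c : Ordinal.{u} | ∀ a' < a, ∀ b' < b, a' ⨳ b ♯ a ⨳ b' < c ♯ a' ⨳ b'} := by
  rw [nmul.eq_1 a b]
  exact csInf_mem (nmul_nonempty a b)

theorem nmul_nadd_lt {a' a b' b : Ordinal.{u}} (ha : a' < a) (hb : b' < b) :
    a' ⨳ b ♯ a ⨳ b' < a ⨳ b ♯ a' ⨳ b' :=
  nmul_mem a b a' ha b' hb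

theorem nmul_nadd_le {a' a b' b : Ordinal.{u}} (ha : a' ≤ a) (hb : b' ≤ b) :
    a' ⨳ b ♯ a ⨳ b' ≤ a ⨳ b ♯ a' ⨳ b' := by
  rcases ha.lt_or_eq with ha | rfl
  · rcases hb.lt_or_eq with hb | rfl
    · exact (nmul_nadd_lt ha hb).le
    · exact (nadd_comm _ _).le
  · exact le_rfl

theorem lt_nmul_iff {c a b : Ordinal.{u}} (h : c < a ⨳ b) :
    ∃ a' < a, ∃ b' < b, c ♯ a' ⨳ b' ≤ a' ⨳ b ♯ a ⨳ b' := by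
  by_contra! H
  have : a ⨳ b ≤ c := by
    rw [nmul.eq_1 a b]
    exact csInf_le' H
  exact absurd h (not_lt.2 this)

theorem nmul_le_of {a b c : Ordinal.{u}}
    (H : ∀ a' < a, ∀ b' < b, a' ⨳ b ♯ a ⨳ b' < c ♯ a' ⨳ b') : a ⨳ b ≤ c := by
  rw [nmul.eq_1 a b]
  exact csInf_le' H

theorem zero_nmul (b : Ordinal.{u}) : 0 ⨳ b = 0 :=
  le_antisymm (nmul_le_of fun _ ha => absurd ha (not_lt.2 zero_le)) zero_le

@[simp]
theorem nmul_zero (a : Ordinal.{u}) : a ⨳ 0 = 0 :=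
  le_antisymm (nmul_le_of fun _ _ _ hb => absurd hb (not_lt.2 zero_le)) zero_le

theorem nmul_one (a : Ordinal.{u}) : a ⨳ 1 = a := by
  apply le_antisymm
  · refine nmul_le_of fun a' ha b' hb => ?_
    rw [Ordinal.lt_one_iff_zero] at hb
    subst hb
    rw [nmul_zero, nmul_zero, nadd_zero, nadd_zero, nmul_one a']
    exact ha
  · refine le_of_forall_lt fun c hc => ?_
    have := nmul_nadd_lt hc (zero_lt_one : (0 : Ordinal.{u}) < 1)
    rw [nmul_zero, nmul_zero, nadd_zero, nadd_zero, nmul_one c] at this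
    exact this
termination_by a

theorem nmul_le_nmul_left {b c : Ordinal.{u}} (h : b ≤ c) (a : Ordinal.{u}) :
    a ⨳ b ≤ a ⨳ c := by
  rcases h.lt_or_eq with h | rfl
  · rcases (zero_le : (0 : Ordinal.{u}) ≤ a).lt_or_eq with ha | rfl
    · have := nmul_nadd_lt ha h
      rw [zero_nmul, zero_nmul, zero_nadd, nadd_zero] at this
      exact this.le
    · rw [zero_nmul, zero_nmul]
  · exact le_rfl

theorem nmul_nadd (a b c : Ordinal.{u}) : a ⨳ (b ♯ c) = a ⨳ b ♯ a ⨳ c := by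
  apply le_antisymm
  · refine nmul_le_of fun a' ha d hd => ?_
    rw [nmul_nadd a' b c]
    rcases lt_nadd_iff.1 hd with ⟨b', hb, hd⟩ | ⟨c', hc, hd⟩
    · have := nadd_lt_nadd_of_lt_of_le (nmul_nadd_lt ha hb) (nmul_nadd_le ha.le hd)
      rw [nmul_nadd a' b' c, nmul_nadd a b' c] at this
      refine (nadd_lt_nadd_iff_right (c := a ⨳ b' ♯ a' ⨳ b')).1 ?_
      convert this using 1 <;> ac_rfl
    · have := nadd_lt_nadd_of_lt_of_le (nmul_nadd_lt ha hc) (nmul_nadd_le ha.le hd)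
      rw [nmul_nadd a' b c', nmul_nadd a b c'] at this
      refine (nadd_lt_nadd_iff_right (c := a ⨳ c' ♯ a' ⨳ c')).1 ?_
      convert this using 1 <;> ac_rfl
  · rw [nadd_le_iff]
    refine ⟨fun d hd => ?_, fun d hd => ?_⟩
    · obtain ⟨a', ha, b', hb, hd⟩ := lt_nmul_iff hd
      have := nadd_lt_nadd_of_le_of_lt hd (nmul_nadd_lt ha (nadd_lt_nadd_right hb c))
      rw [nmul_nadd a' b c, nmul_nadd a b' c, nmul_nadd a' b' c] at this
      refine (nadd_lt_nadd_iff_right (c := a' ⨳ b' ♯ a' ⨳ b ♯ a' ⨳ c ♯ a ⨳ b')).1 ?_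
      convert this using 1 <;> ac_rfl
    · obtain ⟨a', ha, c', hc, hd⟩ := lt_nmul_iff hd
      have := nadd_lt_nadd_of_le_of_lt hd (nmul_nadd_lt ha (nadd_lt_nadd_left hc b))
      rw [nmul_nadd a' b c, nmul_nadd a b c', nmul_nadd a' b c'] at this
      refine (nadd_lt_nadd_iff_right (c := a' ⨳ c' ♯ a' ⨳ b ♯ a' ⨳ c ♯ a ⨳ c')).1 ?_
      convert this using 1 <;> ac_rfl
termination_by (a, b, c)

theorem nmul_succ (a b : Ordinal.{u}) : a ⨳ Order.succ b = a ⨳ b ♯ a := by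
  rw [← nadd_one, nmul_nadd, nmul_one]

end Ordinal

lemma hprod_zero (a : Ordinal) : hprod a 0 = 0 := limitRecOn_zero ..

lemma hprod_succ (a b : Ordinal) : hprod a (Order.succ b) = hprod a b ♯ a := limitRecOn_succ ..

lemma hprod_limit (a b : Ordinal) (h : Order.IsSuccLimit b) :
    hprod a b = ⨆ γ : Set.Iio b, hprod a γ := limitRecOn_limit _ _ _ _ h

theorem stmt18 (a b : Ordinal) : a * b ≤ hprod a b ∧ hprod a b ≤ a ⨳ b := by
  induction b using Ordinal.limitRecOn with
  | zero => simp [hprod_zero]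
  | add_one b ih =>
    rw [← Order.succ_eq_add_one]
    rw [hprod_succ, Ordinal.mul_succ, nmul_succ]
    exact ⟨le_trans (add_le_add_left ih.1 a) (Ordinal.add_le_nadd _ _),
      nadd_le_nadd_right ih.2 a⟩
  | limit b hb ih =>
    rw [hprod_limit a b hb]
    constructor
    · rw [Ordinal.mul_le_iff_of_isSuccLimit hb]
      intro c hc
      calc a * c ≤ hprod a c := (ih c hc).1
        _ ≤ _ := le_ciSup (f := fun γ : Set.Iio b => hprod a γ.1)
          Ordinal.bddAbove_of_small (⟨c, hc⟩ : Set.Iio b)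
    · exact ciSup_le' (f := fun γ : Set.Iio b => hprod a γ.1)
        fun ⟨c, hc⟩ => le_trans (ih c hc).2 (nmul_le_nmul_left (le_of_lt hc) a)
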